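/- Let x, y and z be odd positive integers (so that all three have the same parity) and let a_1,…,a_k be non-negative integers. Then the centrally symmetric region FC_{x,y,z}(a_1,…,a_k,a_k,…,a_1) has no centrally symmetric lozenge tilings, i.e. M_⊙(FC_{x,y,z}(a_1,…,a_k,a_k,…,a_1)) = 0; in other words, x, y and z must be even in order for this region to have any centrally symmetric lozenge tilings. -/

import Mathlib

/-!
Lozenge tilings on the triangular lattice.

A point `(u, v) : ℤ × ℤ` of the lattice denotes the point `u·(1,0) + v·(1/2, √3/2)`
of the plane, so the three families of lattice lines are `v = const` (horizontal),
`u = const` (polar direction π/3) and `u + v = const` (polar direction -π/3).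

A unit triangle is encoded as `(u, v, b) : ℤ × ℤ × Bool`, where `b = true` denotes
the up-pointing triangle with vertices `(u,v), (u+1,v), (u,v+1)` and `b = false`
denotes the down-pointing triangle with vertices `(u+1,v), (u,v+1), (u+1,v+1)`.
-/

/-- A unit triangle of the triangular lattice. -/
abbrev Tri : Type := ℤ × ℤ × Bool

namespace Fern

/-- Two unit triangles share an edge (i.e. their union is a lozenge). -/
def Adj (s t : Tri) : Prop :=
  (s.2.2 = true ∧ t.2.2 = false ∧
    ((t.1 = s.1 ∧ t.2.1 = s.2.1) ∨ (t.1 = s.1 - 1 ∧ t.2.1 = s.2.1) ∨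
      (t.1 = s.1 ∧ t.2.1 = s.2.1 - 1))) ∨
  (s.2.2 = false ∧ t.2.2 = true ∧
    ((s.1 = t.1 ∧ s.2.1 = t.2.1) ∨ (s.1 = t.1 - 1 ∧ s.2.1 = t.2.1) ∨
      (s.1 = t.1 ∧ s.2.1 = t.2.1 - 1)))

/-- A lozenge tiling of the region `R` (a set of unit triangles), encoded as the
function matching each unit triangle of `R` with the one it forms a lozenge with
(and fixing everything outside `R`). -/
structure Tiling (R : Set Tri) where
  mate : Tri → Tri
  mate_mem : ∀ t ∈ R, mate t ∈ R
  adj_mate : ∀ t ∈ R, Adj t (mate t)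
  mate_mate : ∀ t ∈ R, mate (mate t) = t
  mate_eq_self : ∀ t, t ∉ R → mate t = t

/-- `M R` is the number of lozenge tilings of the region `R`. -/
noncomputable def M (R : Set Tri) : ℕ := Nat.card (Tiling R)

/-- The 180° rotation about the point whose doubled coordinates are `(cu, cv)`,
i.e. about the point `(cu/2, cv/2)`. -/
def rot (cu cv : ℤ) (t : Tri) : Tri := (cu - t.1 - 1, cv - t.2.1 - 1, !t.2.2)

/-- `Msym R cu cv` is the number of lozenge tilings of `R` invariant under the
180° rotation about the point `(cu/2, cv/2)` (the center of the region). -/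
noncomputable def Msym (R : Set Tri) (cu cv : ℤ) : ℕ :=
  Nat.card {T : Tiling R // ∀ t ∈ R, T.mate (rot cu cv t) = rot cu cv (T.mate t)}

/-- The (possibly degenerate) hexagonal region consisting of the unit triangles all
of whose vertices `(u,v)` satisfy `umin ≤ u ≤ umax`, `vmin ≤ v ≤ vmax` and
`wmin ≤ u + v ≤ wmax`. -/
def hexSet (umin umax vmin vmax wmin wmax : ℤ) : Set Tri :=
  {t : Tri | umin ≤ t.1 ∧ t.1 + 1 ≤ umax ∧ vmin ≤ t.2.1 ∧ t.2.1 + 1 ≤ vmax ∧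
    (if t.2.2 = true then wmin ≤ t.1 + t.2.1 ∧ t.1 + t.2.1 + 1 ≤ wmax
      else wmin ≤ t.1 + t.2.1 + 1 ∧ t.1 + t.2.1 + 2 ≤ wmax)}

/-- The up-pointing lattice triangle (lobe) of size `a` whose left vertex is `(p, q)`
(vertices `(p,q)`, `(p+a,q)`, `(p,q+a)`). -/
def upLobe (a : ℕ) (p q : ℤ) : Set Tri :=
  hexSet p (p + a) q (q + a) (p + q) (p + q + a)

/-- The down-pointing lattice triangle (lobe) of size `a` whose left vertex is `(p, q)`
(vertices `(p,q)`, `(p+a,q)`, `(p+a,q-a)`). -/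
def downLobe (a : ℕ) (p q : ℤ) : Set Tri :=
  hexSet p (p + a) (q - a) q (p + q) (p + q + a)

/-- Auxiliary function building a fern: the string of lobes of sizes `as`, lined up
along the horizontal lattice line through `(p,q)` starting at the point `(p,q)`,
alternately pointing up and down, the first one pointing up iff the flag is `true`. -/
def fernAux : Bool → List ℕ → ℤ → ℤ → Set Tri
  | _, [], _, _ => ∅
  | true, a :: rest, p, q => upLobe a p q ∪ fernAux false rest (p + a) q
  | false, a :: rest, p, q => downLobe a p q ∪ fernAux true rest (p + a) q

/-- The fern `F(a₁, …, aₘ)` with base point `(p, q)`: a string of lattice triangles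
of sizes `a₁, …, aₘ` lined up along a horizontal lattice line, touching at their
vertices, alternately pointing up and down, the leftmost one pointing up. -/
def fern (as : List ℕ) (p q : ℤ) : Set Tri := fernAux true as p q

mutual
  /-- Sum of the entries in odd positions (1st, 3rd, 5th, …) of a list. -/
  def sumOdd : List ℕ → ℕ
    | [] => 0
    | a :: rest => a + sumEven rest
  /-- Sum of the entries in even positions (2nd, 4th, 6th, …) of a list. -/
  def sumEven : List ℕ → ℕ
    | [] => 0
    | _ :: rest => sumOdd rest
end

/-- The fern-cored hexagon `FC_{x,y,z}(a₁,…,aₘ)`: with `o = a₁+a₃+⋯` and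
`e = a₂+a₄+⋯`, the hexagon `H` of side-lengths `x+e, y+o, z+e, x+o, y+e, z+o`
(clockwise from top; top-left vertex of the top side placed at the origin),
minus the fern `F(a₁,…,aₘ)` based at the center of the auxiliary hexagon `H̄`
of side-lengths `x, y, z, x, y, z` fitting in the western corner of `H`
(shifted by half a unit left, resp. in polar direction `-2π/3`, resp. `2π/3`,
when `x`, resp. `z`, resp. `y` has parity opposite to the other two). -/
def FC (x y z : ℕ) (as : List ℕ) : Set Tri :=
  hexSet 0 ((x : ℤ) + sumEven as + y + sumOdd as)
      (-(y : ℤ) - sumOdd as - z - sumEven as) 0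
      (-(z : ℤ) - sumOdd as) ((x : ℤ) + sumEven as) \
    fern as (((x + y) / 2 : ℕ) : ℤ)
      (-(sumOdd as : ℤ) -
        (if (x + y) % 2 = 0 then (((y + z + 1) / 2 : ℕ) : ℤ) else (((y + z) / 2 : ℕ) : ℤ)))

/-- The number of centrally symmetric lozenge tilings of `FC x y z as`
(the center of the hexagon `H` has doubled coordinates
`(x+y+o+e, -(y+z+o+e))`). -/
noncomputable def McFC (x y z : ℕ) (as : List ℕ) : ℕ :=
  Msym (FC x y z as) ((x : ℤ) + y + (as.sum : ℤ)) (-((y : ℤ) + z + (as.sum : ℤ)))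

/-- The region `FC'_{x,y,z}(a₁,…,a_k,a_k,…,a₁)` (here `as = (a₁,…,a_k)` and
`a = a₁+⋯+a_k`): the hexagon of side-lengths `x+a+1, y+a, z+a, x+a+1, y+a, z+a`
(clockwise from top), minus the fern `F(a₁,…,a_k)` based at the center of the
auxiliary hexagon of side-lengths `x, y, z, x, y, z` in its western corner,
and minus the image of this fern under the 180° rotation about the center of
the big hexagon. -/
def FC' (x y z : ℤ) (as : List ℕ) : Set Tri :=
  hexSet 0 (x + y + 2 * (as.sum : ℤ) + 1) (-(y + z + 2 * (as.sum : ℤ))) 0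
      (-z - (as.sum : ℤ)) (x + (as.sum : ℤ) + 1) \
    (fern as ((x + y) / 2) (-(as.sum : ℤ) - (y + z) / 2) ∪
      rot (x + y + 2 * (as.sum : ℤ) + 1) (-(y + z + 2 * (as.sum : ℤ))) ''
        fern as ((x + y) / 2) (-(as.sum : ℤ) - (y + z) / 2))

/-- The number of centrally symmetric lozenge tilings of `FC' x y z as`. -/
noncomputable def McFC' (x y z : ℤ) (as : List ℕ) : ℕ :=
  Msym (FC' x y z as) (x + y + 2 * (as.sum : ℤ) + 1) (-(y + z + 2 * (as.sum : ℤ)))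

/-- The up-pointing unit triangles removed from along the base of the dented
semihexagon: starting at offset `p`, a block of `b₁` removed triangles, then a
gap of length `b₂`, then `b₃` removed triangles, and so on. -/
def dents : List ℕ → ℤ → Set Tri
  | [], _ => ∅
  | [b], p => {t : Tri | t.2.2 = true ∧ t.2.1 = 0 ∧ p ≤ t.1 ∧ t.1 < p + (b : ℤ)}
  | b :: c :: rest, p =>
      {t : Tri | t.2.2 = true ∧ t.2.1 = 0 ∧ p ≤ t.1 ∧ t.1 < p + (b : ℤ)} ∪
        dents rest (p + b + c)

/-- The dented semihexagon `S(b₁,…,b_l)`: the trapezoid of side-lengths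
`b₂+b₄+⋯`, `b₁+b₃+⋯`, `b₁+⋯+b_l`, `b₁+b₃+⋯` (clockwise from top), with the
leftmost `b₁` up-pointing unit triangles on its base removed, the next segment
of length `b₂` intact, the following `b₃` removed, and so on. -/
def S (bs : List ℕ) : Set Tri :=
  hexSet 0 (bs.sum : ℤ) 0 (sumOdd bs : ℤ) 0 (bs.sum : ℤ) \ dents bs 0

/-- `sC bs = s(b₁,…,b_l)`, the number of lozenge tilings of `S(b₁,…,b_l)`. -/
noncomputable def sC (bs : List ℕ) : ℕ := M (S bs)

/-- The hyperfactorial `h(n) = 0! · 1! ⋯ (n-1)!`. -/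
def hf (n : ℕ) : ℕ := ∏ i ∈ Finset.range n, Nat.factorial i

/-- The hyperfactorial of an integer (of its non-negative part). -/
def hfz (n : ℤ) : ℕ := hf n.toNat

/-- The list `(a 1, a 2, …, a k)`. -/
def mkList (k : ℕ) (a : ℕ → ℕ) : List ℕ := (List.range k).map fun i => a (i + 1)

end Fern

open Fern

/-!
For odd `x, y, z` the centre of the hexagon is a lattice point, so the rotation fixes no
lozenge. A symmetric tiling then pairs up the triangles on one side of the lattice line
`u = c` through the centre: a lozenge either stays on that side or is folded back across the
line by the rotation. Hence this half would contain an even number of triangles. Counted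
modulo 2 (all triangles but those on two sides of a hexagon pair up with their unit-rhombus
partner), the left half of the outer hexagon has `y + a` triangles and the left half of the
fern `a`, where `a = a₁ + ⋯ + a_k`; so the left half of the region has an odd number of
triangles.
-/

theorem Set.Finite.even_ncard_of_involution {α : Type*} {s : Set α} (hs : s.Finite)
    (f : α → α) (hmem : ∀ t ∈ s, f t ∈ s) (hinv : ∀ t ∈ s, f (f t) = t)
    (hne : ∀ t ∈ s, f t ≠ t) : Even s.ncard := by
  rw [← ZMod.natCast_eq_zero_iff_even, Set.ncard_eq_toFinset_card s hs,
    Finset.card_eq_sum_ones, Nat.cast_sum]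
  refine Finset.sum_involution (fun t _ => f t) (fun _ _ => by decide)
    (fun t ht _ => hne t (by simpa using ht)) (fun t ht => ?_)
    (fun t ht => hinv t (by simpa using ht))
  simpa using hmem t (by simpa using ht)

theorem Set.Finite.ncard_mod_two_eq_of_involutive {α : Type*} {s : Set α} (hs : s.Finite)
    (f : α → α) (hinv : f.Involutive) (hne : ∀ t, f t ≠ t) :
    s.ncard % 2 = {t ∈ s | f t ∉ s}.ncard % 2 := by
  have hpaired : Even {t ∈ s | f t ∈ s}.ncard :=
    (hs.subset fun t ht => ht.1).even_ncard_of_involution f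
      (fun t ht => ⟨ht.2, by rw [hinv]; exact ht.1⟩) (fun t _ => hinv t) (fun t _ => hne t)
  rw [← Set.ncard_inter_add_ncard_sdiff_eq_ncard s {t | f t ∈ s} hs]
  change ({t ∈ s | f t ∈ s}.ncard + {t ∈ s | f t ∉ s}.ncard) % 2 = _
  obtain ⟨m, hm⟩ := hpaired
  omega

namespace Fern

theorem rot_rot (cu cv : ℤ) (t : Tri) : rot cu cv (rot cu cv t) = t := by
  obtain ⟨u, v, b⟩ := t
  simp only [rot, Bool.not_not, Prod.mk.injEq, and_true]
  omega

theorem not_adj_self (t : Tri) : ¬ Adj t t := by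
  rintro (⟨h₁, h₂, -⟩ | ⟨h₁, h₂, -⟩) <;> simp [h₁] at h₂

/-- No lozenge is centred at a lattice point. -/
theorem not_adj_rot (c d : ℤ) (t : Tri) : ¬ Adj t (rot (2 * c) (2 * d) t) := by
  obtain ⟨u, v, b⟩ := t
  rintro (⟨-, -, h⟩ | ⟨-, -, h⟩) <;> simp only [rot] at h <;> omega

namespace Tiling

variable {R : Set Tri} (T : Tiling R)

def IsSymmetric (cu cv : ℤ) : Prop :=
  ∀ t ∈ R, T.mate (rot cu cv t) = rot cu cv (T.mate t)

theorem mate_ne_self {t : Tri} (ht : t ∈ R) : T.mate t ≠ t := by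
  intro h
  have hadj := T.adj_mate t ht
  rw [h] at hadj
  exact not_adj_self t hadj

variable {T} {cu cv : ℤ}

theorem IsSymmetric.rot_mem (hT : T.IsSymmetric cu cv) {t : Tri} (ht : t ∈ R) :
    rot cu cv t ∈ R := by
  by_contra hrot
  have h := hT t ht
  rw [T.mate_eq_self _ hrot] at h
  exact T.mate_ne_self ht (by simpa [rot_rot] using congrArg (rot cu cv) h.symm)

/-- Folding the lozenges of a symmetric tiling back into a fundamental domain `L` of the
rotation pairs up the triangles of `L`. -/
theorem IsSymmetric.even_ncard {c d : ℤ} (hT : T.IsSymmetric (2 * c) (2 * d))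
    {L : Set Tri} (hL : L.Finite) (hLR : L ⊆ R)
    (hhalf : ∀ t ∈ R, rot (2 * c) (2 * d) t ∈ L ↔ t ∉ L) : Even L.ncard := by
  classical
  set ρ := rot (2 * c) (2 * d)
  let fold : Tri → Tri := fun t => if T.mate t ∈ L then T.mate t else ρ (T.mate t)
  refine hL.even_ncard_of_involution fold (fun t ht => ?_) (fun t ht => ?_) (fun t ht => ?_)
  · by_cases hm : T.mate t ∈ L
    · simp [fold, hm]
    · simpa [fold, hm] using (hhalf _ (T.mate_mem t (hLR ht))).2 hm
  · have htR := hLR ht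
    by_cases hm : T.mate t ∈ L
    · simp [fold, hm, T.mate_mate t htR, ht]
    · have hρt : ρ t ∉ L := fun h => (hhalf t htR).1 h ht
      simp [fold, hm, hT _ (T.mate_mem t htR), T.mate_mate t htR, hρt, ρ, rot_rot]
  · have htR := hLR ht
    by_cases hm : T.mate t ∈ L
    · simpa [fold, hm] using T.mate_ne_self htR
    · intro h
      have hmate : T.mate t = ρ t := by simpa [fold, hm, ρ, rot_rot] using congrArg ρ h
      have hadj := T.adj_mate t htR
      rw [hmate] at hadj
      exact not_adj_rot c d t hadj

end Tiling

theorem Msym_eq_zero_of_odd_ncard {R : Set Tri} {c d : ℤ} (hL : {t ∈ R | t.1 < c}.Finite)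
    (hodd : Odd {t ∈ R | t.1 < c}.ncard) : Msym R (2 * c) (2 * d) = 0 := by
  refine Nat.card_eq_zero.2 (Or.inl ⟨fun ⟨T, hT⟩ => ?_⟩)
  refine Nat.not_even_iff_odd.2 hodd (Tiling.IsSymmetric.even_ncard hT hL (fun t ht => ht.1) ?_)
  intro t ht
  have hρt : rot (2 * c) (2 * d) t ∈ R := Tiling.IsSymmetric.rot_mem hT ht
  simp only [Set.mem_ofPred_eq, hρt, ht, true_and, not_lt]
  simp only [rot]
  omega

section HexSet

variable {umin umax vmin vmax wmin wmax : ℤ}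

theorem hexSet_mono {umin' umax' vmin' vmax' wmin' wmax' : ℤ} (hu : umin' ≤ umin)
    (hu' : umax ≤ umax') (hv : vmin' ≤ vmin) (hv' : vmax ≤ vmax') (hw : wmin' ≤ wmin)
    (hw' : wmax ≤ wmax') :
    hexSet umin umax vmin vmax wmin wmax ⊆ hexSet umin' umax' vmin' vmax' wmin' wmax' := by
  rintro ⟨u, v, (_ | _)⟩ <;> simp only [hexSet, Set.mem_ofPred_eq] <;> split_ifs <;> omega

theorem hexSet_eq_empty_of_le (h : umax ≤ umin) : hexSet umin umax vmin vmax wmin wmax = ∅ :=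
  Set.eq_empty_of_forall_notMem fun _ ⟨h₁, h₂, _⟩ => by omega

theorem sep_hexSet_fst_lt {c : ℤ} (hc : c ≤ umax) :
    {t ∈ hexSet umin umax vmin vmax wmin wmax | t.1 < c} = hexSet umin c vmin vmax wmin wmax := by
  ext ⟨u, v, (_ | _)⟩ <;> simp only [hexSet, Set.mem_ofPred_eq] <;> split_ifs <;> omega

theorem hexSet_finite : (hexSet umin umax vmin vmax wmin wmax).Finite :=
  ((Set.finite_Icc umin umax).prod ((Set.finite_Icc vmin vmax).prod Set.finite_univ)).subset
    fun _ ⟨h₁, h₂, h₃, h₄, _⟩ =>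
      ⟨⟨h₁, by omega⟩, ⟨h₃, by omega⟩, trivial⟩

def flipTri (t : Tri) : Tri := (t.1, t.2.1, !t.2.2)

theorem flipTri_involutive : Function.Involutive flipTri := fun _ => by simp [flipTri]

theorem flipTri_ne_self (t : Tri) : flipTri t ≠ t := by simp [flipTri, Prod.ext_iff]

def diagSegment (b : Bool) (w lo hi : ℤ) : Set Tri :=
  (fun u => (u, w - u, b)) '' ↑(Finset.Icc lo hi)

theorem diagSegment_finite (b : Bool) (w lo hi : ℤ) : (diagSegment b w lo hi).Finite :=
  (Finset.finite_toSet _).image _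

theorem ncard_diagSegment (b : Bool) (w lo hi : ℤ) :
    (diagSegment b w lo hi).ncard = (hi + 1 - lo).toNat := by
  rw [diagSegment, Set.ncard_image_of_injective _ fun _ _ h => congrArg Prod.fst h,
    Set.ncard_coe_finset, Int.card_Icc]

/-- Up to parity, only the triangles along the two sides `u + v = wmax` and `u + v = wmin`
count: all others pair up with the other triangle of their unit rhombus. -/
theorem ncard_hexSet_mod_two (hw : wmin < wmax) :
    (hexSet umin umax vmin vmax wmin wmax).ncard % 2 =
      ((min (umax - 1) (wmax - 1 - vmin) + 1 - max umin (wmax - vmax)).toNat +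
        (min (umax - 1) (wmin - 1 - vmin) + 1 - max umin (wmin - vmax)).toNat) % 2 := by
  have hboundary : {t ∈ hexSet umin umax vmin vmax wmin wmax |
      flipTri t ∉ hexSet umin umax vmin vmax wmin wmax} =
      diagSegment true (wmax - 1) (max umin (wmax - vmax)) (min (umax - 1) (wmax - 1 - vmin)) ∪
      diagSegment false (wmin - 1) (max umin (wmin - vmax)) (min (umax - 1) (wmin - 1 - vmin)) := by
    ext ⟨u, v, (_ | _)⟩ <;>
      simp only [hexSet, flipTri, diagSegment, Set.mem_ofPred_eq, Set.mem_union, Set.mem_image,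
        Finset.coe_Icc, Set.mem_Icc, Prod.mk.injEq, existsAndEq, Bool.not_true, Bool.not_false,
        reduceIte, Bool.false_eq_true, Bool.true_eq_false, and_true, and_false, true_and,
        or_false, false_or, exists_const] <;> omega
  have hdisj : Disjoint (diagSegment true (wmax - 1) (max umin (wmax - vmax))
      (min (umax - 1) (wmax - 1 - vmin)))
      (diagSegment false (wmin - 1) (max umin (wmin - vmax))
        (min (umax - 1) (wmin - 1 - vmin))) := by
    rw [Set.disjoint_left]
    rintro _ ⟨_, _, rfl⟩ ⟨_, _, h⟩
    simp at h
  rw [hexSet_finite.ncard_mod_two_eq_of_involutive flipTri flipTri_involutive flipTri_ne_self,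
    hboundary,
    Set.ncard_union_eq hdisj (diagSegment_finite _ _ _ _) (diagSegment_finite _ _ _ _),
    ncard_diagSegment, ncard_diagSegment]

end HexSet

theorem sumOdd_add_sumEven (l : List ℕ) : sumOdd l + sumEven l = l.sum := by
  induction l with
  | nil => rfl
  | cons a rest ih => rw [sumOdd, sumEven, List.sum_cons, ← ih]; omega

theorem sumOdd_sumEven_append (l₁ l₂ : List ℕ) :
    sumOdd (l₁ ++ l₂) =
        sumOdd l₁ + (if Even l₁.length then sumOdd l₂ else sumEven l₂) ∧
      sumEven (l₁ ++ l₂) =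
        sumEven l₁ + (if Even l₁.length then sumEven l₂ else sumOdd l₂) := by
  induction l₁ with
  | nil => simp [sumOdd, sumEven]
  | cons a rest ih =>
    rw [List.cons_append, sumOdd, sumEven, sumOdd, sumEven, ih.1, ih.2, List.length_cons]
    simp only [Nat.even_add_one]
    split_ifs <;> omega

theorem sumOdd_sumEven_reverse (l : List ℕ) :
    sumOdd l.reverse = (if Even l.length then sumEven l else sumOdd l) ∧
      sumEven l.reverse = (if Even l.length then sumOdd l else sumEven l) := by
  induction l with
  | nil => simp [sumOdd, sumEven]
  | cons a rest ih =>
    rw [List.reverse_cons, (sumOdd_sumEven_append _ _).1, (sumOdd_sumEven_append _ _).2, ih.1, ih.2,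
      List.length_reverse, List.length_cons]
    simp only [sumOdd, sumEven, Nat.even_add_one]
    split_ifs <;> omega

theorem sumOdd_append_reverse (l : List ℕ) : sumOdd (l ++ l.reverse) = l.sum := by
  rw [(sumOdd_sumEven_append _ _).1, (sumOdd_sumEven_reverse l).1, (sumOdd_sumEven_reverse l).2,
    ← sumOdd_add_sumEven l]
  split_ifs <;> omega

theorem sumEven_append_reverse (l : List ℕ) : sumEven (l ++ l.reverse) = l.sum := by
  rw [(sumOdd_sumEven_append _ _).2, (sumOdd_sumEven_reverse l).1, (sumOdd_sumEven_reverse l).2,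
    ← sumOdd_add_sumEven l]
  split_ifs <;> omega

theorem ncard_upLobe_mod_two (a : ℕ) (p q : ℤ) : (upLobe a p q).ncard % 2 = a % 2 := by
  rcases Nat.eq_zero_or_pos a with rfl | ha
  · simp [upLobe, hexSet_eq_empty_of_le]
  · rw [upLobe, ncard_hexSet_mod_two (by omega)]
    omega

theorem ncard_downLobe_mod_two (a : ℕ) (p q : ℤ) : (downLobe a p q).ncard % 2 = a % 2 := by
  rcases Nat.eq_zero_or_pos a with rfl | ha
  · simp [downLobe, hexSet_eq_empty_of_le]
  · rw [downLobe, ncard_hexSet_mod_two (by omega)]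
    omega

theorem fernAux_subset_hexSet (b : Bool) (l : List ℕ) (p q : ℤ) :
    fernAux b l p q ⊆ hexSet p (p + l.sum) (q - l.sum) (q + l.sum) (p + q) (p + q + l.sum) := by
  induction l generalizing b p with
  | nil => cases b <;> exact Set.empty_subset _
  | cons a rest ih =>
    rw [List.sum_cons, Nat.cast_add]
    have hs : (0 : ℤ) ≤ rest.sum := by positivity
    cases b <;>
      refine Set.union_subset (hexSet_mono ?_ ?_ ?_ ?_ ?_ ?_)
        ((ih _ (p + a)).trans (hexSet_mono ?_ ?_ ?_ ?_ ?_ ?_)) <;>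
      omega

theorem fernAux_finite (b : Bool) (l : List ℕ) (p q : ℤ) : (fernAux b l p q).Finite :=
  hexSet_finite.subset (fernAux_subset_hexSet b l p q)

theorem fernAux_append (b : Bool) (l₁ l₂ : List ℕ) (p q : ℤ) :
    ∃ b', fernAux b (l₁ ++ l₂) p q =
      fernAux b l₁ p q ∪ fernAux b' l₂ (p + l₁.sum) q := by
  induction l₁ generalizing b p with
  | nil => exact ⟨b, by cases b <;> simp [fernAux]⟩
  | cons a rest ih =>
    obtain ⟨b', hb'⟩ := ih (!b) (p + a)
    refine ⟨b', ?_⟩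
    rw [List.sum_cons, Nat.cast_add, ← add_assoc]
    cases b <;> rw [List.cons_append, fernAux, fernAux, Set.union_assoc] <;>
      exact congrArg (_ ∪ ·) hb'

theorem ncard_fernAux_mod_two (b : Bool) (l : List ℕ) (p q : ℤ) :
    (fernAux b l p q).ncard % 2 = l.sum % 2 := by
  induction l generalizing b p with
  | nil => cases b <;> simp [fernAux]
  | cons a rest ih =>
    have hdisj (lobe : Set Tri) (hlobe : ∀ t ∈ lobe, t.1 + 1 ≤ p + a) (b' : Bool) :
        Disjoint lobe (fernAux b' rest (p + a) q) :=
      Set.disjoint_left.2 fun t ht hrest => by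
        have := (fernAux_subset_hexSet _ _ _ _ hrest).1
        have := hlobe t ht
        omega
    cases b
    · rw [fernAux, Set.ncard_union_eq (hdisj (downLobe a p q) (fun t ht => ht.2.1) _)
        hexSet_finite (fernAux_finite _ _ _ _), List.sum_cons, Nat.add_mod,
        ncard_downLobe_mod_two, ih, ← Nat.add_mod]
    · rw [fernAux, Set.ncard_union_eq (hdisj (upLobe a p q) (fun t ht => ht.2.1) _)
        hexSet_finite (fernAux_finite _ _ _ _), List.sum_cons, Nat.add_mod,
        ncard_upLobe_mod_two, ih, ← Nat.add_mod]

theorem FC_append_reverse_leftHalf {x y z : ℕ} (hxy : Even (x + y)) (hyz : Even (y + z))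
    (l : List ℕ) :
    {t ∈ FC x y z (l ++ l.reverse) | t.1 < ((x + y) / 2 : ℕ) + l.sum} =
      hexSet 0 (((x + y) / 2 : ℕ) + l.sum) (-(y : ℤ) - l.sum - z - l.sum) 0 (-(z : ℤ) - l.sum)
          ((x : ℤ) + l.sum) \
        fernAux true l ((x + y) / 2 : ℕ) (-(l.sum : ℤ) - ((y + z) / 2 : ℕ)) := by
  obtain ⟨b', hfern⟩ :=
    fernAux_append true l l.reverse ((x + y) / 2 : ℕ) (-(l.sum : ℤ) - ((y + z) / 2 : ℕ))
  have hxy' : (x + y) % 2 = 0 := Nat.even_iff.1 hxy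
  have hyz' : (y + z + 1) / 2 = (y + z) / 2 := by have := Nat.even_iff.1 hyz; omega
  have hright (t : Tri) (ht : t ∈ fernAux b' l.reverse (((x + y) / 2 : ℕ) + l.sum)
      (-(l.sum : ℤ) - ((y + z) / 2 : ℕ))) : ¬ t.1 < ((x + y) / 2 : ℕ) + l.sum :=
    not_lt.2 (fernAux_subset_hexSet _ _ _ _ ht).1
  rw [FC, sumOdd_append_reverse, sumEven_append_reverse, if_pos hxy', hyz', fern, hfern,
    ← sep_hexSet_fst_lt (c := ((x + y) / 2 : ℕ) + l.sum) (umax := x + l.sum + y + l.sum)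
      (by omega)]
  ext t
  simp only [Set.mem_ofPred_eq, Set.mem_sdiff, Set.mem_union]
  have := hright t
  tauto

theorem odd_ncard_FC_append_reverse_leftHalf {x y z : ℕ} (hx : Odd x) (hy : Odd y) (hz : Odd z)
    (l : List ℕ) :
    Odd {t ∈ FC x y z (l ++ l.reverse) | t.1 < ((x + y) / 2 : ℕ) + l.sum}.ncard := by
  rw [FC_append_reverse_leftHalf (hx.add_odd hy) (hy.add_odd hz)]
  rw [Nat.odd_iff] at hx hy hz ⊢
  set N : ℤ := ((l.sum : ℕ) : ℤ)
  set P : ℤ := (((x + y) / 2 : ℕ) : ℤ)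
  set Q : ℤ := (((y + z) / 2 : ℕ) : ℤ)
  have hN₀ : 0 ≤ N := by positivity
  have hsub : fernAux true l P (-N - Q) ⊆ hexSet 0 (P + N) (-y - N - z - N) 0 (-z - N) (x + N) :=
    (fernAux_subset_hexSet true l _ _).trans
      (hexSet_mono (by omega) (by omega) (by omega) (by omega) (by omega) (by omega))
  rw [Set.ncard_sdiff hsub (fernAux_finite _ _ _ _)]
  have hhex := ncard_hexSet_mod_two (umin := 0) (umax := P + N) (vmin := -y - N - z - N) (vmax := 0)
    (wmin := -z - N) (wmax := x + N) (by omega)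
  have hfern := ncard_fernAux_mod_two true l P (-N - Q)
  have hle := Set.ncard_le_ncard hsub hexSet_finite
  omega

end Fern

/-- If `x, y, z` are odd (positive) integers, the centrally symmetric fern-cored
hexagon `FC_{x,y,z}(a₁,…,a_k,a_k,…,a₁)` has no centrally symmetric lozenge
tilings: `x`, `y` and `z` must be even for such tilings to exist. -/
theorem McFC_eq_zero_of_odd (x y z : ℕ) (hx : Odd x) (hy : Odd y) (hz : Odd z)
    (k : ℕ) (a : ℕ → ℕ) :
    McFC x y z (mkList k a ++ (mkList k a).reverse) = 0 := by
  set l := mkList k a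
  have hcenter : McFC x y z (l ++ l.reverse) = Msym (FC x y z (l ++ l.reverse))
      (2 * (((x + y) / 2 : ℕ) + l.sum)) (2 * -(((y + z) / 2 : ℕ) + l.sum)) := by
    rw [McFC, List.sum_append, List.sum_reverse]
    congr 1 <;> push_cast <;> grind
  rw [hcenter]
  exact Msym_eq_zero_of_odd_ncard (hexSet_finite.subset fun t ht => ht.1.1)
    (odd_ncard_FC_append_reverse_leftHalf hx hy hz l)
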